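/- Let ε > 0 and r > 0. Suppose a ∈ ℓ₁(ℤ) and (a^{(n)})_{n∈ℕ} is a sequence in ℓ₁(ℤ) such that ‖a^{(n)}‖₁ ≤ r for all n, ∑_{k∈ℤ} x(k)a^{(n)}(k) → ∑_{k∈ℤ} x(k)a(k) as n → ∞ for every x ∈ F^{(λ)}, and ‖a^{(n)} − a‖₁ ≥ ε/3 for all n. Then ‖a‖₁ ≤ r − (ε/3)·(1 − |λ|⁻¹)/(1 + |λ|⁻¹). -/

import Mathlib

/-!
Write `R_j y = ∑ₖ x₀(k - j) y(k)` for the pairing of `y ∈ ℓ₁` with `σʲ x₀`. Since `b(2m) = b(m)` and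
`b(2m + 1) = b(m) + 1`, the pairings of the even and odd parts `y(2·)`, `y(2· + 1)` are
`R_{2i} y = R_i y(2·) + λ⁻¹ R_i y(2· + 1)` and `R_{2i+1} y = R_i y(2· + 1) + λ⁻¹ R_{i+1} y(2·)`;
iterating the resulting contraction `R_i y(2·) = λ⁻² R_{i+1} y(2·) + O(R_{2i} y, R_{2i+1} y)` shows
that the even and odd parts of a bounded family that is weak* null against every `σʲ x₀` are again
such families. For one coordinate, `R_j y = y(j) + ∑_{k ≠ j}` (weights of modulus `≤ |λ|⁻¹`), so
asymptotically `|y(j)| ≤ |λ|⁻¹ (‖y‖₁ - |y(j)|)`; splitting a finite window into its even and odd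
parts and halving extends this to every finite window `W`: the mass on `W` is at most `|λ|⁻¹` times
the mass off `W`, up to `o(1)`.

Apply this to `d⁽ⁿ⁾ = a⁽ⁿ⁾ - a` and a window `W` carrying almost all of the mass of `a`:
`r ≥ ‖a⁽ⁿ⁾‖₁ ≳ ‖a‖₁ + ‖d⁽ⁿ⁾‖₁ - 2 ‖d⁽ⁿ⁾|_W‖₁`, while `‖d⁽ⁿ⁾|_W‖₁ ≲ |λ|⁻¹ (‖d⁽ⁿ⁾‖₁ - ‖d⁽ⁿ⁾|_W‖₁)`
and `‖d⁽ⁿ⁾‖₁ ≥ ε / 3`.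
-/

open scoped ENNReal
open Filter Topology

noncomputable section

/-- `ℓ₁(ℤ)`, the complex Banach space of absolutely summable bilateral sequences. -/
abbrev ellOne : Type := lp (fun _ : ℤ => ℂ) 1

/-- `ℓ∞(ℤ)`, the complex Banach space of bounded bilateral sequences. -/
abbrev ellInf : Type := lp (fun _ : ℤ => ℂ) ∞

lemma memℓp_zshift (m : ℤ) (x : ellInf) : Memℓp (fun n : ℤ => x (n - m)) ∞ := by
  have hx := memℓp_infty_iff.1 (lp.memℓp x)
  refine memℓp_infty (hx.mono ?_)
  rintro r ⟨n, rfl⟩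
  exact ⟨n - m, rfl⟩

/-- translation by `m` on `ℓ∞(ℤ)`: `(zshift m x) n = x (n - m)`.  In particular `zshift 1` is
the bilateral shift `σ`, with `σ(x)(n) = x (n - 1)`, and `zshift m = σ^m`. -/
def zshift (m : ℤ) (x : ellInf) : ellInf := ⟨fun n => x (n - m), memℓp_zshift m x⟩

/-- `b(n)` = number of ones in the binary expansion of `n ≥ 0`. -/
def binOnes (n : ℤ) : ℕ := (Nat.digits 2 n.toNat).sum

/-- the element `x₀`: `x₀(n) = λ^{-b(n)}` for `n ≥ 0` and `x₀(n) = 0` for `n < 0`. -/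
def x0Fun (lam : ℂ) : ℤ → ℂ := fun n => if 0 ≤ n then lam⁻¹ ^ binOnes n else 0

lemma x0_mem (lam : ℂ) (h : 1 < ‖lam‖) : Memℓp (x0Fun lam) ∞ := by
  refine memℓp_infty ⟨1, ?_⟩
  rintro r ⟨n, rfl⟩
  simp only [x0Fun]
  split_ifs
  · rw [norm_pow]
    refine pow_le_one₀ (norm_nonneg _) ?_
    rw [norm_inv]
    exact inv_le_one_of_one_le₀ h.le
  · simp

/-- `x₀` as an element of `ℓ∞(ℤ)`. -/
def x0L (lam : ℂ) (h : 1 < ‖lam‖) : ellInf := ⟨x0Fun lam, x0_mem lam h⟩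

/-- `F^{(λ)}`: the closed linear span in `ℓ∞(ℤ)` of the bilateral shifts `σ^m(x₀)`, `m ∈ ℤ`. -/
def Flam (lam : ℂ) (h : 1 < ‖lam‖) : Submodule ℂ ellInf :=
  (Submodule.span ℂ (Set.range fun m : ℤ => zshift m (x0L lam h))).topologicalClosure

theorem HasSum.int_even_add_odd {M : Type*} [AddCommMonoid M] [TopologicalSpace M]
    [ContinuousAdd M] {f : ℤ → M} {m m' : M} (he : HasSum (fun k ↦ f (2 * k)) m)
    (ho : HasSum (fun k ↦ f (2 * k + 1)) m') : HasSum f (m + m') := by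
  have hinj := mul_right_injective₀ (two_ne_zero' ℤ)
  replace ho := ((add_left_injective 1).comp hinj).hasSum_range_iff.2 ho
  refine (hinj.hasSum_range_iff.2 he).add_isCompl ?_ ho
  simpa [Function.comp_def] using Int.isCompl_even_odd

theorem tsum_int_even_add_odd {M : Type*} [AddCommMonoid M] [TopologicalSpace M]
    [ContinuousAdd M] [T2Space M] {f : ℤ → M} (he : Summable fun k ↦ f (2 * k))
    (ho : Summable fun k ↦ f (2 * k + 1)) :
    ∑' k, f k = ∑' k, f (2 * k) + ∑' k, f (2 * k + 1) :=
  (he.hasSum.int_even_add_odd ho.hasSum).tsum_eq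

lemma Summable.comp_two_mul {E : Type*} [NormedAddCommGroup E] {y : ℤ → E}
    (hy : Summable fun k ↦ ‖y k‖) : Summable fun k ↦ ‖y (2 * k)‖ :=
  hy.comp_injective (mul_right_injective₀ two_ne_zero)

lemma Summable.comp_two_mul_add_one {E : Type*} [NormedAddCommGroup E] {y : ℤ → E}
    (hy : Summable fun k ↦ ‖y k‖) : Summable fun k ↦ ‖y (2 * k + 1)‖ :=
  hy.comp_injective ((add_left_injective 1).comp (mul_right_injective₀ two_ne_zero))

lemma tsum_norm_comp_two_mul_le {E : Type*} [NormedAddCommGroup E] {y : ℤ → E}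
    (hy : Summable fun k ↦ ‖y k‖) : ∑' k, ‖y (2 * k)‖ ≤ ∑' k, ‖y k‖ :=
  (le_add_of_nonneg_right (tsum_nonneg fun _ ↦ norm_nonneg _)).trans_eq
    (tsum_int_even_add_odd (f := fun k ↦ ‖y k‖) hy.comp_two_mul hy.comp_two_mul_add_one).symm

lemma tsum_norm_comp_two_mul_add_one_le {E : Type*} [NormedAddCommGroup E] {y : ℤ → E}
    (hy : Summable fun k ↦ ‖y k‖) : ∑' k, ‖y (2 * k + 1)‖ ≤ ∑' k, ‖y k‖ :=
  (le_add_of_nonneg_left (tsum_nonneg fun _ ↦ norm_nonneg _)).trans_eq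
    (tsum_int_even_add_odd (f := fun k ↦ ‖y k‖) hy.comp_two_mul hy.comp_two_mul_add_one).symm

lemma Finset.sum_eq_sum_preimage_two_mul_add_sum_preimage_two_mul_add_one {M : Type*}
    [AddCommMonoid M] (W : Finset ℤ) (f : ℤ → M) :
    ∑ k ∈ W, f k
      = ∑ v ∈ W.preimage (2 * ·) (mul_right_injective₀ two_ne_zero).injOn, f (2 * v)
        + ∑ v ∈ W.preimage (2 * · + 1)
            ((add_left_injective 1).comp (mul_right_injective₀ two_ne_zero)).injOn,
          f (2 * v + 1) := by
  classical
  rw [sum_preimage', sum_preimage', ← sum_filter_add_sum_filter_not W (· ∈ Set.range (2 * ·))]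
  congr 2
  ext k
  simp only [Finset.mem_filter, Set.mem_range]
  refine and_congr_right fun _ ↦ ⟨fun h ↦ ?_, fun ⟨v, hv⟩ ⟨w, hw⟩ ↦ by omega⟩
  obtain ⟨v, hv | hv⟩ := Int.even_or_odd' k
  · exact absurd ⟨v, hv.symm⟩ h
  · exact ⟨v, hv.symm⟩

lemma tendsto_zero_of_le_mul_succ_add {ι : Type*} {l : Filter ι} {u g : ℤ → ι → ℝ} {c B : ℝ}
    (hc0 : 0 ≤ c) (hc1 : c < 1) (hu0 : ∀ i n, 0 ≤ u i n) (huB : ∀ i n, u i n ≤ B)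
    (hrec : ∀ i n, u i n ≤ c * u (i + 1) n + g i n) (hg : ∀ i, Tendsto (g i) l (𝓝 0))
    (i : ℤ) : Tendsto (u i) l (𝓝 0) := by
  have hiter : ∀ m : ℕ, ∀ i, ∀ δ > 0, ∀ᶠ n in l, u i n ≤ c ^ m * B + δ := by
    intro m
    induction m with
    | zero => exact fun i δ hδ ↦ .of_forall fun n ↦ by linarith [huB i n]
    | succ m ih =>
      intro i δ hδ
      filter_upwards [ih (i + 1) (δ / 2) (by positivity),
        (hg i).eventually (gt_mem_nhds (half_pos hδ))] with n hn hgn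
      calc u i n ≤ c * u (i + 1) n + g i n := hrec i n
        _ ≤ c * (c ^ m * B + δ / 2) + δ / 2 := by gcongr
        _ ≤ c ^ (m + 1) * B + δ := by rw [pow_succ]; nlinarith
  have hpow : Tendsto (fun m : ℕ ↦ c ^ m * B) atTop (𝓝 0) := by
    simpa using (tendsto_pow_atTop_nhds_zero_of_lt_one hc0 hc1).mul_const B
  refine tendsto_order.2 ⟨fun a ha ↦ .of_forall fun n ↦ ha.trans_le (hu0 i n), fun ε hε ↦ ?_⟩
  obtain ⟨m, hm⟩ := (hpow.eventually (gt_mem_nhds (half_pos hε))).exists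
  filter_upwards [hiter m i (ε / 2) (half_pos hε)] with n hn
  linarith

lemma le_tsum_norm_add {α E : Type*} [NormedAddCommGroup E] {f g : α → E}
    (hf : Summable fun k ↦ ‖f k‖) (hg : Summable fun k ↦ ‖g k‖) (W : Finset α) :
    2 * ∑ k ∈ W, ‖f k‖ - ∑' k, ‖f k‖ + (∑' k, ‖g k‖ - 2 * ∑ k ∈ W, ‖g k‖)
      ≤ ∑' k, ‖f k + g k‖ := by
  have hfg : Summable fun k ↦ ‖f k + g k‖ :=
    (hf.add hg).of_nonneg_of_le (fun _ ↦ norm_nonneg _) fun _ ↦ norm_add_le _ _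
  rw [← hf.sum_add_tsum_compl (s := W), ← hg.sum_add_tsum_compl (s := W),
    ← hfg.sum_add_tsum_compl (s := W)]
  have hin : ∑ k ∈ W, ‖f k‖ - ∑ k ∈ W, ‖g k‖ ≤ ∑ k ∈ W, ‖f k + g k‖ := by
    rw [← Finset.sum_sub_distrib]
    exact Finset.sum_le_sum fun k _ ↦ norm_sub_le_norm_add _ _
  have hout : ∑' k : ((W : Set α)ᶜ : Set α), ‖g k‖ - ∑' k : ((W : Set α)ᶜ : Set α), ‖f k‖
      ≤ ∑' k : ((W : Set α)ᶜ : Set α), ‖f k + g k‖ := by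
    calc _ = ∑' k : ((W : Set α)ᶜ : Set α), (‖g k‖ - ‖f k‖) :=
          ((hg.subtype _).tsum_sub (hf.subtype _)).symm
      _ ≤ _ := ((hg.subtype _).sub (hf.subtype _)).tsum_le_tsum
          (fun k ↦ (norm_sub_le_norm_add _ _).trans_eq (by rw [add_comm]; rfl)) (hfg.subtype _)
  linarith

lemma lp.hasSum_norm_one {α : Type*} {E : α → Type*} [∀ i, NormedAddCommGroup (E i)]
    (f : lp E 1) : HasSum (fun i ↦ ‖f i‖) ‖f‖ := by
  simpa using lp.hasSum_norm (by simp : 0 < (1 : ℝ≥0∞).toReal) f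

lemma binOnes_two_mul (m : ℤ) : binOnes (2 * m) = binOnes m := by
  rcases le_or_gt m 0 with hm | hm
  · simp [binOnes, Int.toNat_of_nonpos hm, Int.toNat_of_nonpos (by omega : 2 * m ≤ 0)]
  · have h2 : (2 * m).toNat = 2 * m.toNat := by omega
    rw [binOnes, binOnes, h2, Nat.digits_def' one_lt_two (by omega)]
    simp

lemma binOnes_two_mul_add_one {m : ℤ} (hm : 0 ≤ m) : binOnes (2 * m + 1) = binOnes m + 1 := by
  have h2 : (2 * m + 1).toNat = 2 * m.toNat + 1 := by omega
  rw [binOnes, binOnes, h2, Nat.digits_def' one_lt_two (by omega), Nat.mul_add_mod,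
    Nat.mul_add_div two_pos]
  simp [Nat.add_comm]

lemma one_le_binOnes {m : ℤ} (hm : 0 < m) : 1 ≤ binOnes m := by
  have hm' : m.toNat ≠ 0 := by omega
  exact (Nat.pos_of_ne_zero (Nat.getLast_digit_ne_zero 2 hm')).trans_le
    (List.le_sum_of_mem (List.getLast_mem _))

section x0

variable {lam : ℂ}

lemma x0Fun_zero : x0Fun lam 0 = 1 := by
  simp [x0Fun, binOnes]

lemma x0Fun_two_mul (m : ℤ) : x0Fun lam (2 * m) = x0Fun lam m := by
  simp only [x0Fun, binOnes_two_mul, show (0 ≤ 2 * m ↔ 0 ≤ m) by omega]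

lemma x0Fun_two_mul_add_one (m : ℤ) :
    x0Fun lam (2 * m + 1) = lam⁻¹ * x0Fun lam m := by
  by_cases hm : 0 ≤ m
  · rw [x0Fun, x0Fun, if_pos (by omega), if_pos hm, binOnes_two_mul_add_one hm, pow_succ,
      mul_comm]
  · simp [x0Fun, hm, show ¬ 0 ≤ 2 * m + 1 by omega]

lemma norm_x0Fun_le_inv_pow (m : ℤ) : ‖x0Fun lam m‖ ≤ ‖lam‖⁻¹ ^ binOnes m := by
  unfold x0Fun
  split_ifs
  · rw [norm_pow, norm_inv]
  · simp

lemma norm_x0Fun_le_one (hlam : 1 ≤ ‖lam‖) (m : ℤ) : ‖x0Fun lam m‖ ≤ 1 :=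
  (norm_x0Fun_le_inv_pow m).trans (pow_le_one₀ (by positivity) (inv_le_one_of_one_le₀ hlam))

lemma norm_x0Fun_le_inv (hlam : 1 ≤ ‖lam‖) {m : ℤ} (hm : m ≠ 0) : ‖x0Fun lam m‖ ≤ ‖lam‖⁻¹ := by
  rcases lt_or_gt_of_ne hm with hneg | hpos
  · simp [x0Fun, not_le.2 hneg]
  · calc ‖x0Fun lam m‖ ≤ ‖lam‖⁻¹ ^ binOnes m := norm_x0Fun_le_inv_pow m
      _ ≤ ‖lam‖⁻¹ ^ 1 := pow_le_pow_of_le_one (by positivity) (inv_le_one_of_one_le₀ hlam)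
          (one_le_binOnes hpos)
      _ = ‖lam‖⁻¹ := pow_one _

end x0

/-- The pairing `∑ₖ (σʲ x₀)(k) y(k)`. -/
def x0Pairing (lam : ℂ) (j : ℤ) (y : ℤ → ℂ) : ℂ := ∑' k, x0Fun lam (k - j) * y k

section pairing

variable {lam : ℂ} {y : ℤ → ℂ}

lemma summable_x0Fun_mul (hlam : 1 ≤ ‖lam‖) (hy : Summable fun k ↦ ‖y k‖) (j : ℤ) :
    Summable fun k ↦ x0Fun lam (k - j) * y k :=
  .of_norm_bounded hy fun k ↦ by
    rw [norm_mul]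
    exact mul_le_of_le_one_left (norm_nonneg _) (norm_x0Fun_le_one hlam _)

lemma norm_x0Pairing_le (hlam : 1 ≤ ‖lam‖) (hy : Summable fun k ↦ ‖y k‖) (j : ℤ) :
    ‖x0Pairing lam j y‖ ≤ ∑' k, ‖y k‖ :=
  tsum_of_norm_bounded hy.hasSum fun k ↦ by
    rw [norm_mul]
    exact mul_le_of_le_one_left (norm_nonneg _) (norm_x0Fun_le_one hlam _)

lemma x0Pairing_two_mul (hlam : 1 ≤ ‖lam‖) (hy : Summable fun k ↦ ‖y k‖) (i : ℤ) :
    x0Pairing lam (2 * i) y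
      = x0Pairing lam i (fun v ↦ y (2 * v)) + lam⁻¹ * x0Pairing lam i (fun v ↦ y (2 * v + 1)) := by
  rw [x0Pairing, tsum_int_even_add_odd, x0Pairing, x0Pairing, ← tsum_mul_left]
  · congr 1 <;> refine tsum_congr fun v ↦ ?_
    · rw [← mul_sub, x0Fun_two_mul]
    · rw [show 2 * v + 1 - 2 * i = 2 * (v - i) + 1 by ring, x0Fun_two_mul_add_one, mul_assoc]
  · exact summable_x0Fun_mul hlam hy.comp_two_mul _ |>.congr fun v ↦ by
      rw [← mul_sub, x0Fun_two_mul]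
  · exact (summable_x0Fun_mul hlam hy.comp_two_mul_add_one i).mul_left lam⁻¹ |>.congr fun v ↦ by
      rw [show 2 * v + 1 - 2 * i = 2 * (v - i) + 1 by ring, x0Fun_two_mul_add_one, mul_assoc]

lemma x0Pairing_two_mul_add_one (hlam : 1 ≤ ‖lam‖) (hy : Summable fun k ↦ ‖y k‖) (i : ℤ) :
    x0Pairing lam (2 * i + 1) y
      = x0Pairing lam i (fun v ↦ y (2 * v + 1))
        + lam⁻¹ * x0Pairing lam (i + 1) (fun v ↦ y (2 * v)) := by
  rw [x0Pairing, tsum_int_even_add_odd, x0Pairing, x0Pairing, ← tsum_mul_left, add_comm]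
  · congr 1 <;> refine tsum_congr fun v ↦ ?_
    · rw [show 2 * v + 1 - (2 * i + 1) = 2 * (v - i) by ring, x0Fun_two_mul]
    · rw [show 2 * v - (2 * i + 1) = 2 * (v - (i + 1)) + 1 by ring, x0Fun_two_mul_add_one,
        mul_assoc]
  · exact (summable_x0Fun_mul hlam hy.comp_two_mul (i + 1)).mul_left lam⁻¹ |>.congr fun v ↦ by
      rw [show 2 * v - (2 * i + 1) = 2 * (v - (i + 1)) + 1 by ring, x0Fun_two_mul_add_one,
        mul_assoc]
  · exact summable_x0Fun_mul hlam hy.comp_two_mul_add_one i |>.congr fun v ↦ by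
      rw [show 2 * v + 1 - (2 * i + 1) = 2 * (v - i) by ring, x0Fun_two_mul]

lemma norm_le_norm_x0Pairing_add (hlam : 1 ≤ ‖lam‖) (hy : Summable fun k ↦ ‖y k‖) (j : ℤ) :
    ‖y j‖ ≤ ‖x0Pairing lam j y‖ + ‖lam‖⁻¹ * (∑' k, ‖y k‖ - ‖y j‖) := by
  classical
  set tail : ℂ := ∑' k, if k = j then 0 else x0Fun lam (k - j) * y k
  have hsplit : x0Pairing lam j y = y j + tail := by
    rw [x0Pairing, (summable_x0Fun_mul hlam hy j).tsum_eq_add_tsum_ite j, sub_self, x0Fun_zero,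
      one_mul]
  have htail : ‖tail‖ ≤ ‖lam‖⁻¹ * (∑' k, ‖y k‖ - ‖y j‖) := by
    refine tsum_of_norm_bounded ((hasSum_ite_sub_hasSum hy.hasSum j).mul_left ‖lam‖⁻¹) fun k ↦ ?_
    split_ifs with hk
    · simp
    · rw [norm_mul]
      exact mul_le_mul_of_nonneg_right (norm_x0Fun_le_inv hlam (sub_ne_zero.2 hk)) (norm_nonneg _)
  calc ‖y j‖ = ‖x0Pairing lam j y - tail‖ := by rw [hsplit, add_sub_cancel_right]
    _ ≤ ‖x0Pairing lam j y‖ + ‖tail‖ := norm_sub_le _ _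
    _ ≤ _ := by gcongr

lemma norm_x0Pairing_even_le (hlam : 1 ≤ ‖lam‖) (hy : Summable fun k ↦ ‖y k‖) (i : ℤ) :
    ‖x0Pairing lam i (fun v ↦ y (2 * v))‖
      ≤ ‖lam‖⁻¹ ^ 2 * ‖x0Pairing lam (i + 1) (fun v ↦ y (2 * v))‖
        + (‖x0Pairing lam (2 * i) y‖ + ‖lam‖⁻¹ * ‖x0Pairing lam (2 * i + 1) y‖) := by
  have hrec : x0Pairing lam i (fun v ↦ y (2 * v))
      = lam⁻¹ ^ 2 * x0Pairing lam (i + 1) (fun v ↦ y (2 * v))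
        + (x0Pairing lam (2 * i) y - lam⁻¹ * x0Pairing lam (2 * i + 1) y) := by
    rw [x0Pairing_two_mul hlam hy, x0Pairing_two_mul_add_one hlam hy]
    ring
  rw [hrec]
  refine (norm_add_le _ _).trans (add_le_add ?_ ((norm_sub_le _ _).trans_eq ?_)) <;>
    simp [norm_pow, norm_inv]

end pairing

structure IsShiftNull (lam : ℂ) {ι : Type*} (l : Filter ι) (D : ι → ℤ → ℂ) : Prop where
  summable : ∀ n, Summable fun k ↦ ‖D n k‖
  bdd : ∃ B, ∀ n, ∑' k, ‖D n k‖ ≤ B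
  tendsto : ∀ j, Tendsto (fun n ↦ x0Pairing lam j (D n)) l (𝓝 0)

namespace IsShiftNull

variable {lam : ℂ} {ι : Type*} {l : Filter ι} {D : ι → ℤ → ℂ}

lemma even (hlam : 1 < ‖lam‖) (hD : IsShiftNull lam l D) :
    IsShiftNull lam l (fun n v ↦ D n (2 * v)) := by
  obtain ⟨B, hB⟩ := hD.bdd
  have hq : ‖lam‖⁻¹ < 1 := inv_lt_one_of_one_lt₀ hlam
  have hbdd : ∀ n, ∑' v, ‖D n (2 * v)‖ ≤ B :=
    fun n ↦ (tsum_norm_comp_two_mul_le (hD.summable n)).trans (hB n)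
  refine ⟨fun n ↦ (hD.summable n).comp_two_mul, ⟨B, hbdd⟩, fun i ↦ ?_⟩
  refine tendsto_zero_iff_norm_tendsto_zero.2 <| tendsto_zero_of_le_mul_succ_add (by positivity)
    (pow_lt_one₀ (by positivity) hq two_ne_zero) (fun _ _ ↦ norm_nonneg _)
    (fun i n ↦ (norm_x0Pairing_le hlam.le (hD.summable n).comp_two_mul i).trans (hbdd n))
    (fun i n ↦ norm_x0Pairing_even_le hlam.le (hD.summable n) i) (fun i ↦ ?_) i
  simpa using ((hD.tendsto (2 * i)).norm.add ((hD.tendsto (2 * i + 1)).norm.const_mul ‖lam‖⁻¹))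

lemma odd (hlam : 1 < ‖lam‖) (hD : IsShiftNull lam l D) :
    IsShiftNull lam l (fun n v ↦ D n (2 * v + 1)) := by
  obtain ⟨B, hB⟩ := hD.bdd
  have hlam0 : lam ≠ 0 := norm_pos_iff.1 (one_pos.trans hlam)
  refine ⟨fun n ↦ (hD.summable n).comp_two_mul_add_one,
    ⟨B, fun n ↦ (tsum_norm_comp_two_mul_add_one_le (hD.summable n)).trans (hB n)⟩, fun i ↦ ?_⟩
  have hodd : ∀ n, x0Pairing lam i (fun v ↦ D n (2 * v + 1))
      = lam * (x0Pairing lam (2 * i) (D n) - x0Pairing lam i (fun v ↦ D n (2 * v))) := by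
    intro n
    rw [x0Pairing_two_mul hlam.le (hD.summable n)]
    field_simp
    ring
  simpa [hodd] using ((hD.tendsto (2 * i)).sub ((hD.even hlam).tendsto i)).const_mul lam

lemma eventually_sum_norm_le_of_subset_Ico (hlam : 1 < ‖lam‖) (N : ℕ) :
    ∀ {D : ι → ℤ → ℂ}, IsShiftNull lam l D → ∀ (a : ℤ) (W : Finset ℤ),
      W ⊆ Finset.Ico a (a + N) → ∀ ε > 0, ∀ᶠ n in l,
        ∑ k ∈ W, ‖D n k‖ ≤ ‖lam‖⁻¹ * (∑' k, ‖D n k‖ - ∑ k ∈ W, ‖D n k‖) + ε := by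
  -- the halved even and odd parts of `W` lie in windows of length `⌈N / 2⌉ < N`
  induction N using Nat.strong_induction_on with
  | _ N ih =>
  intro D hD a W hW ε hε
  rcases le_or_gt N 1 with hN | hN
  · have hWa : W ⊆ {a} := fun k hk ↦ by
      have := Finset.mem_Ico.1 (hW hk)
      exact Finset.mem_singleton.2 (by omega)
    rcases Finset.subset_singleton_iff.1 hWa with rfl | rfl
    · refine .of_forall fun n ↦ ?_
      have : 0 ≤ ∑' k, ‖D n k‖ := tsum_nonneg fun _ ↦ norm_nonneg _
      simp only [Finset.sum_empty, sub_zero]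
      positivity
    · filter_upwards [(hD.tendsto a).norm.eventually (gt_mem_nhds (by simpa using hε))]
        with n hn
      rw [Finset.sum_singleton]
      linarith [norm_le_norm_x0Pairing_add hlam.le (hD.summable n) a]
  · have hlen : (N + 1) / 2 < N := by omega
    have hW0 : W.preimage (2 * ·) (mul_right_injective₀ two_ne_zero).injOn
        ⊆ Finset.Ico ((a + 1) / 2) ((a + 1) / 2 + ((N + 1) / 2 : ℕ)) := fun v hv ↦ by
      have := Finset.mem_Ico.1 (hW (Finset.mem_preimage.1 hv))
      exact Finset.mem_Ico.2 (by omega)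
    have hW1 : W.preimage (2 * · + 1)
        ((add_left_injective 1).comp (mul_right_injective₀ two_ne_zero)).injOn
        ⊆ Finset.Ico (a / 2) (a / 2 + ((N + 1) / 2 : ℕ)) := fun v hv ↦ by
      have := Finset.mem_Ico.1 (hW (Finset.mem_preimage.1 hv))
      exact Finset.mem_Ico.2 (by omega)
    filter_upwards [ih _ hlen (hD.even hlam) _ _ hW0 _ (half_pos hε),
      ih _ hlen (hD.odd hlam) _ _ hW1 _ (half_pos hε)] with n h0 h1
    rw [Finset.sum_eq_sum_preimage_two_mul_add_sum_preimage_two_mul_add_one,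
      tsum_int_even_add_odd (f := fun k ↦ ‖D n k‖) (hD.summable n).comp_two_mul
        (hD.summable n).comp_two_mul_add_one]
    linarith

lemma eventually_sum_norm_le (hlam : 1 < ‖lam‖) (hD : IsShiftNull lam l D) (W : Finset ℤ)
    {ε : ℝ} (hε : 0 < ε) :
    ∀ᶠ n in l, ∑ k ∈ W, ‖D n k‖ ≤ ‖lam‖⁻¹ * (∑' k, ‖D n k‖ - ∑ k ∈ W, ‖D n k‖) + ε := by
  obtain ⟨a, ha⟩ := W.bddBelow
  obtain ⟨b, hb⟩ := W.bddAbove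
  refine eventually_sum_norm_le_of_subset_Ico hlam (b + 1 - a).toNat hD a W (fun k hk ↦ ?_) ε hε
  have := ha hk
  have := hb hk
  exact Finset.mem_Ico.2 (by omega)

end IsShiftNull

lemma isShiftNull_sub_of_tendsto {lam : ℂ} (h : 1 < ‖lam‖) {ι : Type*} {l : Filter ι}
    (a : ellOne) (A : ι → ellOne) {r : ℝ} (hbound : ∀ n, ‖A n‖ ≤ r)
    (hconv : ∀ x ∈ Flam lam h,
      Tendsto (fun n ↦ ∑' k : ℤ, x k * A n k) l (𝓝 (∑' k : ℤ, x k * a k))) :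
    IsShiftNull lam l (fun n k ↦ A n k - a k) := by
  have hsum (f : ellOne) : Summable fun k ↦ ‖f k‖ := (lp.hasSum_norm_one f).summable
  refine ⟨fun n ↦ by simpa using hsum (A n - a), ⟨r + ‖a‖, fun n ↦ ?_⟩, fun j ↦ ?_⟩
  · have hnorm := (lp.hasSum_norm_one (A n - a)).tsum_eq
    simp only [lp.coeFn_sub, Pi.sub_apply] at hnorm
    linarith [norm_sub_le (A n) a, hbound n]
  · have hx : zshift j (x0L lam h) ∈ Flam lam h :=
      Submodule.le_topologicalClosure _ (Submodule.subset_span ⟨j, rfl⟩)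
    have hlim := (hconv _ hx).sub_const (∑' k : ℤ, zshift j (x0L lam h) k * a k)
    rw [sub_self] at hlim
    refine hlim.congr fun n ↦ ?_
    change ∑' k, x0Fun lam (k - j) * A n k - ∑' k, x0Fun lam (k - j) * a k = _
    rw [x0Pairing, ← (summable_x0Fun_mul h.le (hsum _) j).tsum_sub
      (summable_x0Fun_mul h.le (hsum a) j)]
    simp only [mul_sub]

theorem statement_11_general (lam : ℂ) (h : 1 < ‖lam‖) (ε r : ℝ)
    (a : ellOne) (A : ℕ → ellOne)
    (hbound : ∀ n : ℕ, ‖A n‖ ≤ r)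
    (hconv : ∀ x : ellInf, x ∈ Flam lam h →
      Tendsto (fun n : ℕ => ∑' k : ℤ, x k * (A n) k) atTop (𝓝 (∑' k : ℤ, x k * a k)))
    (hsep : ∀ n : ℕ, ε / 3 ≤ ‖A n - a‖) :
    ‖a‖ ≤ r - ε / 3 * ((1 - ‖lam‖⁻¹) / (1 + ‖lam‖⁻¹)) := by
  have hD := isShiftNull_sub_of_tendsto h a A hbound hconv
  have hq : ‖lam‖⁻¹ < 1 := inv_lt_one_of_one_lt₀ h
  refine le_of_forall_pos_le_add fun θ hθ ↦ ?_
  obtain ⟨W, hW⟩ : ∃ W : Finset ℤ, ‖a‖ - θ / 4 < ∑ k ∈ W, ‖a k‖ :=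
    ((lp.hasSum_norm_one a).eventually (lt_mem_nhds (by linarith))).exists
  obtain ⟨n, hn⟩ := (hD.eventually_sum_norm_le h W (by positivity : 0 < θ / 4)).exists
  have hmass := le_tsum_norm_add (lp.hasSum_norm_one a).summable (hD.summable n) W
  have hdiff : ∑' k, ‖A n k - a k‖ = ‖A n - a‖ := by
    simpa using (lp.hasSum_norm_one (A n - a)).tsum_eq
  simp only [add_sub_cancel, (lp.hasSum_norm_one _).tsum_eq, hdiff] at hmass hn
  set U := ∑ k ∈ W, ‖A n k - a k‖
  have hgain : ε / 3 * ((1 - ‖lam‖⁻¹) / (1 + ‖lam‖⁻¹)) ≤ ‖A n - a‖ - 2 * U + θ / 2 := by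
    rw [← mul_div_assoc, div_le_iff₀ (by positivity)]
    have hq0 : 0 ≤ ‖lam‖⁻¹ := by positivity
    nlinarith [mul_le_mul_of_nonneg_left (hsep n) (sub_nonneg.2 hq.le), mul_nonneg hθ.le hq0]
  linarith [hbound n]

/-- Statement 11.  If `‖a⁽ⁿ⁾‖₁ ≤ r`, `a⁽ⁿ⁾ → a` in the weak* topology induced by `F^{(λ)}`
(i.e. `∑_k x(k) a⁽ⁿ⁾(k) → ∑_k x(k) a(k)` for every `x ∈ F^{(λ)}`), and
`‖a⁽ⁿ⁾ − a‖₁ ≥ ε/3` for all `n`, then `‖a‖₁ ≤ r − (ε/3)·(1 − |λ|⁻¹)/(1 + |λ|⁻¹)`. -/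
theorem statement_11 (lam : ℂ) (h : 1 < ‖lam‖) (ε r : ℝ) (hε : 0 < ε) (hr : 0 < r)
    (a : ellOne) (A : ℕ → ellOne)
    (hbound : ∀ n : ℕ, ‖A n‖ ≤ r)
    (hconv : ∀ x : ellInf, x ∈ Flam lam h →
      Tendsto (fun n : ℕ => ∑' k : ℤ, x k * (A n) k) atTop (𝓝 (∑' k : ℤ, x k * a k)))
    (hsep : ∀ n : ℕ, ε / 3 ≤ ‖A n - a‖) :
    ‖a‖ ≤ r - ε / 3 * ((1 - ‖lam‖⁻¹) / (1 + ‖lam‖⁻¹)) :=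
  statement_11_general lam h ε r a A hbound hconv hsep
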